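/- arXiv:2004.01937 — 2 statements merged into one kernel-verified Lean document; each statement's English description precedes it below -/
import Mathlib

section
/- For the two-sided instance W = 1000, sizes w = (300, 340), bounds q = (15, 15) and Q = (15, 18): every feasible integer solution with minimum total waste uses 11 master items with waste 380, while the minimum number of master items over all feasible solutions is 10, achieved with waste 400. Hence the waste-minimal solution does not minimise master items and vice versa. -/
/-- A pattern for master size 1000 with sizes (300, 340). -/
def ValidPattern (a : Fin 2 → ℕ) : Prop :=
  300 * a 0 + 340 * a 1 ≤ 1000

/-- Two-sided feasibility: exactly 15 items of size 300, between 15 and 18 of size 340. -/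
def Feasible (x : (Fin 2 → ℕ) →₀ ℕ) : Prop :=
  (∀ a ∈ x.support, ValidPattern a) ∧
  x.sum (fun a c => c * a 0) = 15 ∧
  15 ≤ x.sum (fun a c => c * a 1) ∧
  x.sum (fun a c => c * a 1) ≤ 18

/-- Total waste of a solution. -/
def waste (x : (Fin 2 → ℕ) →₀ ℕ) : ℕ :=
  x.sum (fun a c => c * (1000 - (300 * a 0 + 340 * a 1)))

/-- Number of master items used. -/
def masters (x : (Fin 2 → ℕ) →₀ ℕ) : ℕ :=
  x.sum (fun _ c => c)

lemma key_identity (x : (Fin 2 → ℕ) →₀ ℕ) (hv : ∀ a ∈ x.support, ValidPattern a) :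
    1000 * masters x =
      300 * x.sum (fun a c => c * a 0) + 340 * x.sum (fun a c => c * a 1) + waste x := by
  unfold masters waste Finsupp.sum
  rw [Finset.mul_sum, Finset.mul_sum, Finset.mul_sum, ← Finset.sum_add_distrib,
    ← Finset.sum_add_distrib]
  apply Finset.sum_congr rfl
  intro a ha
  have h := hv a ha
  unfold ValidPattern at h
  set c := x a
  set p := a 0
  set q := a 1
  have h1 : 300 * (c * p) + 340 * (c * q) = c * (300 * p + 340 * q) := by ring
  rw [h1, ← Nat.mul_add]
  have h2 : 300 * p + 340 * q + (1000 - (300 * p + 340 * q)) = 1000 := by omega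
  rw [h2]; ring

lemma waste_ge (x : (Fin 2 → ℕ) →₀ ℕ) (hv : ∀ a ∈ x.support, ValidPattern a) :
    20 * masters x ≤ waste x := by
  unfold masters waste Finsupp.sum
  rw [Finset.mul_sum]
  apply Finset.sum_le_sum
  intro a ha
  have h := hv a ha
  unfold ValidPattern at h
  have h20 : 20 ≤ 1000 - (300 * a 0 + 340 * a 1) := by omega
  calc 20 * x a = x a * 20 := by ring
    _ ≤ x a * (1000 - (300 * a 0 + 340 * a 1)) := Nat.mul_le_mul_left _ h20

lemma two_single_feasible (p q : Fin 2 → ℕ) (cp cq : ℕ)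
    (hp : ValidPattern p) (hq : ValidPattern q) (i : Fin 2) :
    (Finsupp.single p cp + Finsupp.single q cq).sum (fun a c => c * a i)
      = cp * p i + cq * q i := by
  rw [Finsupp.sum_add_index' (fun a => by simp) (fun a b₁ b₂ => by ring),
    Finsupp.sum_single_index (by simp), Finsupp.sum_single_index (by simp)]

lemma two_single_valid (p q : Fin 2 → ℕ) (cp cq : ℕ)
    (hp : ValidPattern p) (hq : ValidPattern q) :
    ∀ a ∈ (Finsupp.single p cp + Finsupp.single q cq).support, ValidPattern a := by
  intro a ha
  have := Finsupp.support_add ha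
  simp only [Finset.mem_union] at this
  rcases this with h | h <;>
    [have := Finsupp.support_single_subset h; have := Finsupp.support_single_subset h] <;>
    simp only [Finset.mem_singleton] at this <;> subst this <;> assumption

lemma two_single_waste (p q : Fin 2 → ℕ) (cp cq : ℕ) :
    waste (Finsupp.single p cp + Finsupp.single q cq)
      = cp * (1000 - (300 * p 0 + 340 * p 1)) + cq * (1000 - (300 * q 0 + 340 * q 1)) := by
  unfold waste
  rw [Finsupp.sum_add_index' (fun a => by simp) (fun a b₁ b₂ => by ring),
    Finsupp.sum_single_index (by simp), Finsupp.sum_single_index (by simp)]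

lemma two_single_masters (p q : Fin 2 → ℕ) (cp cq : ℕ) :
    masters (Finsupp.single p cp + Finsupp.single q cq) = cp + cq := by
  unfold masters
  rw [Finsupp.sum_add_index' (fun a => by simp) (fun a b₁ b₂ => rfl),
    Finsupp.sum_single_index rfl, Finsupp.sum_single_index rfl]

lemma main_facts (x : (Fin 2 → ℕ) →₀ ℕ) (hx : Feasible x) : ∃ S : ℕ,
    1000 * masters x = 4500 + 340 * S + waste x ∧
    20 * masters x ≤ waste x ∧
    15 ≤ S ∧ S ≤ 18 := by
  obtain ⟨hv, h0, hl, hu⟩ := hx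
  set T := x.sum (fun a c => c * a 1) with hT
  refine ⟨T, ?_, waste_ge x hv, hl, hu⟩
  have key := key_identity x hv
  rw [h0, ← hT] at key
  clear_value T
  clear hT hv h0 hl hu
  omega

/-- for W = 1000, w = (300,340), q = (15,15), Q = (15,18): the minimum
waste is 380, every waste-minimal solution uses 11 master items, the minimum number
of master items is 10, and it is achieved with waste 400. Hence waste minimisation
and master-item minimisation differ. -/
theorem stmt4 :
    IsLeast {v : ℕ | ∃ x, Feasible x ∧ waste x = v} 380 ∧
    (∀ x, Feasible x → waste x = 380 → masters x = 11) ∧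
    IsLeast {n : ℕ | ∃ x, Feasible x ∧ masters x = n} 10 ∧
    (∃ x, Feasible x ∧ masters x = 10 ∧ waste x = 400) ∧
    (∀ x, Feasible x → masters x = 10 → waste x ≠ 380) := by
  have hp1 : ValidPattern ![1, 2] := by unfold ValidPattern; norm_num
  have hp2 : ValidPattern ![3, 0] := by unfold ValidPattern; norm_num
  have hp3 : ValidPattern ![2, 1] := by unfold ValidPattern; norm_num
  -- witness 1: 9 × (1,2) + 2 × (3,0): masters 11, waste 380
  set x1 : (Fin 2 → ℕ) →₀ ℕ := Finsupp.single ![1, 2] 9 + Finsupp.single ![3, 0] 2 with hx1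
  have hf1 : Feasible x1 := by
    refine ⟨two_single_valid _ _ _ _ hp1 hp2, ?_, ?_, ?_⟩ <;>
      rw [hx1, two_single_feasible _ _ _ _ hp1 hp2] <;> norm_num
  have hw1 : waste x1 = 380 := by rw [hx1, two_single_waste]; norm_num
  -- witness 2: 5 × (1,2) + 5 × (2,1): masters 10, waste 400
  set x2 : (Fin 2 → ℕ) →₀ ℕ := Finsupp.single ![1, 2] 5 + Finsupp.single ![2, 1] 5 with hx2
  have hf2 : Feasible x2 := by
    refine ⟨two_single_valid _ _ _ _ hp1 hp3, ?_, ?_, ?_⟩ <;>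
      rw [hx2, two_single_feasible _ _ _ _ hp1 hp3] <;> norm_num
  have hw2 : waste x2 = 400 := by rw [hx2, two_single_waste]; norm_num
  have hm2 : masters x2 = 10 := by rw [hx2, two_single_masters]
  refine ⟨⟨⟨x1, hf1, hw1⟩, ?_⟩, ?_, ⟨⟨x2, hf2, hm2⟩, ?_⟩, ⟨x2, hf2, hm2, hw2⟩, ?_⟩
  · rintro v ⟨x, hx, rfl⟩
    obtain ⟨S, h1, h2, h3, h4⟩ := main_facts x hx
    clear_value x1 x2
    clear hx hf1 hf2 hw1 hw2 hm2 hx1 hx2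
    interval_cases S <;> omega
  · intro x hx hw
    obtain ⟨S, h1, h2, h3, h4⟩ := main_facts x hx
    rw [hw] at h1 h2
    clear_value x1 x2
    clear hx hf1 hf2 hw1 hw2 hm2 hx1 hx2 hw
    omega
  · rintro n ⟨x, hx, rfl⟩
    obtain ⟨S, h1, h2, h3, h4⟩ := main_facts x hx
    clear_value x1 x2
    clear hx hf1 hf2 hw1 hw2 hm2 hx1 hx2
    omega
  · intro x hx hm hw
    obtain ⟨S, h1, h2, h3, h4⟩ := main_facts x hx
    rw [hw] at h1 h2
    rw [hm] at h1 h2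
    clear_value x1 x2
    clear hx hf1 hf2 hw1 hw2 hm2 hx1 hx2 hw hm
    omega
end

section
/- For the instance W = 1000, w = (300, 340), two-sided bounds q = (15,15), Q = (15,18): every feasible solution using exactly 10 master items has total waste at least 400, and every feasible solution has total waste at least 380, with waste 380 attainable only using 11 master items. -/
lemma waste_eq (x : (Fin 2 → ℕ) →₀ ℕ) (h : ∀ a ∈ x.support, ValidPattern a) :
    waste x + 300 * x.sum (fun a c => c * a 0) + 340 * x.sum (fun a c => c * a 1)
      = 1000 * masters x := by
  unfold waste masters Finsupp.sum
  rw [Finset.mul_sum, Finset.mul_sum, Finset.mul_sum, ← Finset.sum_add_distrib,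
    ← Finset.sum_add_distrib]
  refine Finset.sum_congr rfl fun a ha => ?_
  have := h a ha
  unfold ValidPattern at this
  simp only []
  have hc : x a * (1000 - (300 * a 0 + 340 * a 1)) + x a * (300 * a 0 + 340 * a 1)
      = x a * 1000 := by rw [← Nat.mul_add, Nat.sub_add_cancel this]
  have h2 : 300 * (x a * a 0) + 340 * (x a * a 1) = x a * (300 * a 0 + 340 * a 1) := by ring
  omega

lemma count_le (x : (Fin 2 → ℕ) →₀ ℕ) (h : ∀ a ∈ x.support, ValidPattern a) :
    x.sum (fun a c => c * a 0) + x.sum (fun a c => c * a 1) ≤ 3 * masters x := by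
  unfold masters Finsupp.sum
  rw [Finset.mul_sum, ← Finset.sum_add_distrib]
  refine Finset.sum_le_sum fun a ha => ?_
  have := h a ha
  unfold ValidPattern at this
  have : a 0 + a 1 ≤ 3 := by omega
  nlinarith

/-- for W = 1000, w = (300,340), q = (15,15), Q = (15,18): every
feasible solution with exactly 10 master items has waste at least 400; every
feasible solution has waste at least 380; and waste 380 is attainable, but only
with 11 master items. -/
theorem stmt18 :
    (∀ x, Feasible x → masters x = 10 → 400 ≤ waste x) ∧
    (∀ x, Feasible x → 380 ≤ waste x) ∧
    (∃ x, Feasible x ∧ waste x = 380) ∧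
    (∀ x, Feasible x → waste x = 380 → masters x = 11) := by
  have key : ∀ x, Feasible x → ∃ s,
      waste x + 300 * 15 + 340 * s = 1000 * masters x ∧
      15 + s ≤ 3 * masters x ∧ 15 ≤ s ∧ s ≤ 18 := by
    intro x ⟨hv, h0, h1, h2⟩
    refine ⟨x.sum (fun a c => c * a 1), ?_, ?_, h1, h2⟩
    · have := waste_eq x hv; rwa [h0] at this
    · have := count_le x hv; rwa [h0] at this
  refine ⟨fun x hx hm => ?_, fun x hx => ?_, ?_, fun x hx hw => ?_⟩
  · obtain ⟨s, e1, e2, e3, e4⟩ := key x hx; omega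
  · obtain ⟨s, e1, e2, e3, e4⟩ := key x hx; omega
  · have hs : ∀ (g : (Fin 2 → ℕ) → ℕ),
        (Finsupp.single ![2, 1] 4 + Finsupp.single ![1, 2] 7).sum (fun a c => c * g a)
          = 4 * g ![2, 1] + 7 * g ![1, 2] := by
      intro g
      rw [Finsupp.sum_add_index' (h := fun a c => c * g a) (fun a => zero_mul (g a))
          (fun a b c => add_mul b c (g a))]
      rw [Finsupp.sum_single_index (zero_mul (g ![2, 1])),
        Finsupp.sum_single_index (zero_mul (g ![1, 2]))]
    refine ⟨Finsupp.single ![2, 1] 4 + Finsupp.single ![1, 2] 7, ⟨?_, ?_, ?_, ?_⟩, ?_⟩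
    · intro a ha
      rcases Finset.mem_union.mp (Finsupp.support_add ha) with h | h <;>
        [have := Finsupp.support_single_subset h; have := Finsupp.support_single_subset h] <;>
        simp only [Finset.mem_singleton] at this <;> subst this <;>
        simp [ValidPattern]
    · rw [hs]; norm_num
    · rw [hs]; norm_num
    · rw [hs]; norm_num
    · rw [waste, hs]; norm_num
  · obtain ⟨s, e1, e2, e3, e4⟩ := key x hx; omega
end
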